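/- Let (S_n)_{n≥0} be a simple symmetric random walk on ℤ started at S_0 = 1 (i.i.d. steps equal to +1 or −1 with probability 1/2 each), let T = inf{n ≥ 0 : S_n = 0} be its hitting time of 0, and let N be a random variable independent of the walk with P(N > k) = 3^{−k} for every integer k ≥ 0. Then E(min(N, T)) = 3(√2 − 1). -/

import Mathlib

/-!
By independence, `P(min(N, T) > k) = P(N > k) · P(T > k)`, and on the event that the steps
`X 0, …, X (k-1)` follow a given `±1` path, `T > k` says that the path, started at `0`, never
goes below `0`. Counting such paths (ballot numbers, summed over the number of up-steps, give
`C(k, ⌊k/2⌋)`) yields `P(T > k) = C(k, ⌊k/2⌋) / 2^k`, hence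
`E(min(N, T)) = ∑ₖ C(k, ⌊k/2⌋) / 6^k`. Splitting into even and odd `k` and using
`2 C(2j+1, j) = C(2j+2, j+1)`, this is `4 G - 3` for `G = ∑ⱼ C(2j, j) / 36^j`, and the binomial
series `∑ⱼ C(2j, j) xʲ = (1 - 4x)^(-1/2)` gives `G = 3√2/4`. That `T < ∞` almost surely follows
from `P(T > 2j) = C(2j, j) / 4^j → 0`.
-/

open MeasureTheory ProbabilityTheory
open scoped ENNReal

open Finset in
lemma Finset.card_filter_snoc {n : ℕ} {α : Type*} [Fintype α] (p : (Fin (n + 1) → α) → Prop)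
    [DecidablePred p] : #{v | p v} = ∑ b, #{u : Fin n → α | p (Fin.snoc u b)} := by
  simp only [card_filter]
  rw [← (Fin.snocEquiv fun _ => α).sum_comp, Fintype.sum_prod_type]
  rfl

namespace BoolPath

open Finset

variable {n : ℕ}

def signOf (b : Bool) : ℤ := if b then 1 else -1

def step (v : Fin n → Bool) (i : ℕ) : ℤ := if h : i < n then signOf (v ⟨i, h⟩) else 0

def height (v : Fin n → Bool) (j : ℕ) : ℤ := ∑ i ∈ range j, step v i

def upCount (v : Fin n → Bool) : ℕ := ∑ i, (v i).toNat

def IsNonneg (v : Fin n → Bool) : Prop := ∀ j ≤ n, 0 ≤ height v j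

instance : DecidablePred (IsNonneg (n := n)) := fun _ => Nat.decidableBallLE n _

lemma signOf_eq_two_mul_toNat_sub_one (b : Bool) : signOf b = 2 * b.toNat - 1 := by cases b <;> rfl

lemma signOf_injective : Function.Injective signOf := by decide

lemma step_snoc_of_lt (u : Fin n → Bool) (b : Bool) {i : ℕ} (hi : i < n) :
    step (Fin.snoc u b : Fin (n + 1) → Bool) i = step u i := by
  simp [step, hi, Nat.lt_succ_of_lt hi, Fin.snoc, Fin.castLT]

lemma height_snoc_of_le (u : Fin n → Bool) (b : Bool) {j : ℕ} (hj : j ≤ n) :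
    height (Fin.snoc u b : Fin (n + 1) → Bool) j = height u j :=
  sum_congr rfl fun _ hi => step_snoc_of_lt u b ((mem_range.1 hi).trans_le hj)

lemma height_snoc_succ (u : Fin n → Bool) (b : Bool) :
    height (Fin.snoc u b : Fin (n + 1) → Bool) (n + 1) = height u n + signOf b := by
  rw [height, sum_range_succ, ← height, height_snoc_of_le u b le_rfl]
  simp [step, Fin.snoc]

lemma upCount_snoc (u : Fin n → Bool) (b : Bool) :
    upCount (Fin.snoc u b : Fin (n + 1) → Bool) = upCount u + b.toNat := by
  simp [upCount, Fin.sum_univ_castSucc]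

lemma height_eq_two_mul_upCount_sub (v : Fin n → Bool) : height v n = 2 * upCount v - n := by
  rw [height, ← Fin.sum_univ_eq_sum_range (step v), upCount]
  simp [step, signOf_eq_two_mul_toNat_sub_one, Finset.mul_sum]

lemma height_succ (v : Fin n → Bool) (j : ℕ) : height v (j + 1) = height v j + step v j :=
  sum_range_succ _ _

lemma step_eq_one_or_neg_one (v : Fin n → Bool) {i : ℕ} (hi : i < n) :
    step v i = 1 ∨ step v i = -1 := by
  simp only [step, hi, dite_true, signOf]
  split_ifs <;> simp

lemma isNonneg_iff_forall_height_ne (v : Fin n → Bool) :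
    IsNonneg v ↔ ∀ j ≤ n, height v j ≠ -1 := by
  refine ⟨fun h j hj => by have := h j hj; omega, fun h j => ?_⟩
  induction j with
  | zero => simp [height]
  | succ j ih =>
    intro hj
    have := ih (by omega)
    have := h (j + 1) hj
    rw [height_succ] at this ⊢
    rcases step_eq_one_or_neg_one v (show j < n by omega) with hs | hs <;>
      rw [hs] at this ⊢ <;> omega

lemma isNonneg_snoc_iff (u : Fin n → Bool) (b : Bool) :
    IsNonneg (Fin.snoc u b : Fin (n + 1) → Bool) ↔ IsNonneg u ∧ 0 ≤ height u n + signOf b := by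
  refine ⟨fun h => ⟨fun j hj => ?_, ?_⟩, fun ⟨hu, hb⟩ j hj => ?_⟩
  · simpa [height_snoc_of_le u b hj] using h j (by omega)
  · simpa [height_snoc_succ] using h (n + 1) le_rfl
  · rcases Nat.lt_or_ge j (n + 1) with hj' | hj'
    · rw [height_snoc_of_le u b (by omega)]; exact hu j (by omega)
    · rw [show j = n + 1 by omega, height_snoc_succ]; exact hb

def nonnegWithUpCount (n t : ℕ) : Finset (Fin n → Bool) := {v | IsNonneg v ∧ upCount v = t}

lemma nonnegWithUpCount_zero (t : ℕ) : #(nonnegWithUpCount 0 t) = if t = 0 then 1 else 0 := by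
  split_ifs with ht <;> simp [nonnegWithUpCount, IsNonneg, height, upCount, ht, eq_comm]

lemma nonnegWithUpCount_succ_zero (n : ℕ) : nonnegWithUpCount (n + 1) 0 = ∅ := by
  refine filter_false_of_mem fun v _ ⟨hv, hup⟩ => ?_
  have := hv (n + 1) le_rfl
  rw [height_eq_two_mul_upCount_sub, hup] at this
  omega

lemma card_nonnegWithUpCount_succ_succ (n t : ℕ) :
    #(nonnegWithUpCount (n + 1) (t + 1)) =
      #(nonnegWithUpCount n t) +
        if n + 1 ≤ 2 * (t + 1) then #(nonnegWithUpCount n (t + 1)) else 0 := by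
  rw [nonnegWithUpCount, card_filter_snoc, Fintype.sum_bool]
  simp only [isNonneg_snoc_iff, upCount_snoc, Bool.toNat_true, Bool.toNat_false, signOf,
    if_true, if_false, Bool.false_eq_true, add_zero, add_left_inj]
  congr 1
  · refine congrArg card (filter_congr fun u _ => ?_)
    have := height_eq_two_mul_upCount_sub u
    constructor
    · rintro ⟨⟨hu, -⟩, hup⟩; exact ⟨hu, by omega⟩
    · rintro ⟨hu, rfl⟩; exact ⟨⟨hu, by have := hu n le_rfl; omega⟩, rfl⟩
  · split_ifs with h
    · refine congrArg card (filter_congr fun u _ => ?_)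
      have := height_eq_two_mul_upCount_sub u
      constructor
      · rintro ⟨⟨hu, -⟩, hup⟩; exact ⟨hu, hup⟩
      · rintro ⟨hu, hup⟩; exact ⟨⟨hu, by rw [this, hup]; push_cast; omega⟩, hup⟩
    · refine card_eq_zero.2 (filter_false_of_mem fun u _ ⟨⟨_, hpos⟩, hup⟩ => h ?_)
      have := height_eq_two_mul_upCount_sub u
      rw [hup] at this
      push_cast at this
      omega

lemma card_nonnegWithUpCount (n t : ℕ) : (#(nonnegWithUpCount n t) : ℤ) =
    if n ≤ 2 * t then (n.choose t : ℤ) - n.choose (t + 1) else 0 := by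
  induction n generalizing t with
  | zero => rw [nonnegWithUpCount_zero]; rcases t with _ | t <;> simp
  | succ n ih =>
    rcases t with _ | t
    · simp [nonnegWithUpCount_succ_zero]
    rw [card_nonnegWithUpCount_succ_succ]
    push_cast [apply_ite (Nat.cast : ℕ → ℤ), ih, Nat.choose_succ_succ]
    by_cases h₁ : n ≤ 2 * t
    · simp [h₁, show n ≤ 2 * (t + 1) by omega, show n + 1 ≤ 2 * (t + 1) by omega]; ring
    by_cases h₂ : n = 2 * t + 1
    · subst h₂
      simp [h₁, Nat.choose_symm_half]
    · simp [h₁, show ¬ n + 1 ≤ 2 * (t + 1) by omega]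

lemma upCount_le (v : Fin n → Bool) : upCount v ≤ n := by
  simpa [upCount] using sum_le_sum fun i (_ : i ∈ univ) => Bool.toNat_le (v i)

theorem card_filter_isNonneg (n : ℕ) : #{v : Fin n → Bool | IsNonneg v} = n.choose (n / 2) := by
  have hfib : #{v : Fin n → Bool | IsNonneg v} = ∑ t ∈ range (n + 1), #(nonnegWithUpCount n t) := by
    rw [card_eq_sum_card_fiberwise fun v _ => mem_range.2 (Nat.lt_succ_of_le (upCount_le v))]
    simp only [nonnegWithUpCount, filter_filter]
  have hsupp : range (n + 1) = Ico 0 (n - n / 2) ∪ Ico (n - n / 2) (n + 1) := by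
    rw [Ico_union_Ico_eq_Ico (Nat.zero_le _) (by omega), range_eq_Ico]
  zify
  rw [hfib, Nat.cast_sum, hsupp, sum_union (Ico_disjoint_Ico_consecutive _ _ _),
    sum_congr rfl fun t ht => (card_nonnegWithUpCount n t).trans (if_neg (by simp at ht; omega)),
    sum_congr rfl fun t ht => (card_nonnegWithUpCount n t).trans (if_pos (by simp at ht; omega))]
  have htelescope := sum_Ico_sub (fun t => (n.choose t : ℤ)) (show n - n / 2 ≤ n + 1 by omega)
  rw [sum_sub_distrib] at htelescope ⊢
  rw [Nat.choose_eq_zero_of_lt (Nat.lt_succ_self n), Nat.choose_symm (Nat.div_le_self n 2)]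
    at htelescope
  simp only [sum_const_zero, zero_add]
  push_cast at htelescope
  linarith

end BoolPath

section CentralBinomialSeries

open Finset Filter Topology Nat

lemma ascPochhammer_eval_half_mul_four_pow (n : ℕ) :
    (ascPochhammer ℝ n).eval (1 / 2) * 4 ^ n = n ! * n.centralBinom := by
  induction n with
  | zero => simp
  | succ n ih =>
    have hrec : ((n : ℝ) + 1) * (n + 1).centralBinom = 2 * (2 * n + 1) * n.centralBinom := by
      exact_mod_cast Nat.succ_mul_centralBinom_succ n
    rw [ascPochhammer_succ_eval, factorial_succ, pow_succ]
    push_cast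
    linear_combination (4 * (n : ℝ) + 2) * ih - (n ! : ℝ) * hrec

lemma multichoose_one_half_eq (n : ℕ) :
    Ring.multichoose (1 / 2 : ℝ) n = n.centralBinom / 4 ^ n := by
  have h := Ring.factorial_nsmul_multichoose_eq_ascPochhammer (1 / 2 : ℝ) n
  rw [Polynomial.ascPochhammer_smeval_eq_eval, nsmul_eq_mul] at h
  rw [eq_div_iff (by positivity)]
  refine mul_left_cancel₀ (Nat.cast_ne_zero.2 n.factorial_ne_zero) ?_
  rw [← mul_assoc, h, ascPochhammer_eval_half_mul_four_pow]

theorem hasSum_centralBinom_mul_pow {x : ℝ} (hx : |x| < 1 / 4) :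
    HasSum (fun n => n.centralBinom * x ^ n) (1 / √(1 - 4 * x)) := by
  have hball : 4 * x ∈ Metric.eball (0 : ℝ) 1 := by
    rw [Metric.mem_eball, edist_zero_right, ← ofReal_norm, ENNReal.ofReal_lt_one,
      Real.norm_eq_abs, abs_mul, abs_of_pos four_pos]
    linarith
  have := (Real.one_div_one_sub_rpow_hasFPowerSeriesOnBall_zero (1 / 2)).hasSum hball
  simp only [FormalMultilinearSeries.ofScalars_apply_eq, zero_add, ← Ring.multichoose_eq,
    multichoose_one_half_eq, smul_eq_mul, ← Real.sqrt_eq_rpow] at this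
  refine this.congr_fun fun n => ?_
  rw [mul_pow]
  field_simp

lemma two_mul_choose_two_mul_add_one (j : ℕ) : 2 * (2 * j + 1).choose j = (j + 1).centralBinom := by
  rw [Nat.centralBinom_eq_two_mul_choose, Nat.mul_succ, Nat.choose_succ_succ, Nat.choose_symm_half]
  ring

theorem hasSum_choose_half_div_six_pow :
    HasSum (fun k => (k.choose (k / 2) : ℝ) / 6 ^ k) (3 * (√2 - 1)) := by
  have hG := hasSum_centralBinom_mul_pow (x := 1 / 36) (by norm_num [abs_of_pos])
  have hval : 1 / √(1 - 4 * (1 / 36 : ℝ)) = 3 * √2 / 4 := by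
    have hsqrt : √(1 - 4 * (1 / 36 : ℝ)) = 2 * √2 / 3 := by
      rw [Real.sqrt_eq_iff_eq_sq (by norm_num) (by positivity), div_pow, mul_pow,
        Real.sq_sqrt zero_le_two]
      norm_num
    rw [hsqrt]
    field_simp
    rw [Real.sq_sqrt zero_le_two]
    norm_num
  rw [hval] at hG
  have heven : HasSum (fun j => ((2 * j).choose (2 * j / 2) : ℝ) / 6 ^ (2 * j)) (3 * √2 / 4) := by
    refine hG.congr_fun fun j => ?_
    rw [Nat.mul_div_cancel_left j two_pos, ← Nat.centralBinom_eq_two_mul_choose, pow_mul]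
    rw [div_eq_mul_inv, ← inv_pow, one_div]
    norm_num
  have hodd : HasSum (fun j => ((2 * j + 1).choose ((2 * j + 1) / 2) : ℝ) / 6 ^ (2 * j + 1))
      (3 * (3 * √2 / 4 - 1)) := by
    have hshift := (hasSum_nat_add_iff' 1).2 hG
    rw [sum_range_one, Nat.centralBinom_zero, pow_zero, Nat.cast_one, mul_one] at hshift
    refine (hshift.mul_left 3).congr_fun fun j => ?_
    have h2 : 2 * ((2 * j + 1).choose j : ℝ) = (j + 1).centralBinom := by
      exact_mod_cast two_mul_choose_two_mul_add_one j
    rw [show (2 * j + 1) / 2 = j by omega, ← h2, pow_succ, pow_mul, one_div_pow]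
    field_simp
    ring
  convert HasSum.even_add_odd (f := fun k => (k.choose (k / 2) : ℝ) / 6 ^ k) heven hodd using 1
  ring

lemma two_mul_add_one_mul_centralBinom_sq_le (n : ℕ) :
    (2 * n + 1) * n.centralBinom ^ 2 ≤ 16 ^ n := by
  induction n with
  | zero => simp
  | succ n ih =>
    refine Nat.le_of_mul_le_mul_left (c := (n + 1) ^ 2) ?_ (by positivity)
    calc (n + 1) ^ 2 * ((2 * (n + 1) + 1) * (n + 1).centralBinom ^ 2)
        = (2 * n + 3) * ((n + 1) * (n + 1).centralBinom) ^ 2 := by ring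
      _ = 4 * (2 * n + 3) * (2 * n + 1) * ((2 * n + 1) * n.centralBinom ^ 2) := by
        rw [Nat.succ_mul_centralBinom_succ]; ring
      _ ≤ 16 * (n + 1) ^ 2 * 16 ^ n := Nat.mul_le_mul (by nlinarith) ih
      _ = (n + 1) ^ 2 * 16 ^ (n + 1) := by ring

lemma tendsto_centralBinom_div_four_pow :
    Tendsto (fun n => (n.centralBinom : ℝ) / 4 ^ n) atTop (𝓝 0) := by
  have hbound (n : ℕ) : (n.centralBinom : ℝ) / 4 ^ n ≤ √(1 / ((n : ℝ) + 1)) := by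
    rw [Real.le_sqrt (by positivity) (by positivity), div_pow, ← pow_mul, mul_comm, pow_mul,
      div_le_div_iff₀ (by positivity) (by positivity)]
    have h : ((2 * n + 1) * n.centralBinom ^ 2 : ℝ) ≤ 16 ^ n := by
      exact_mod_cast two_mul_add_one_mul_centralBinom_sq_le n
    norm_num
    nlinarith [sq_nonneg (n.centralBinom : ℝ), (n.cast_nonneg : (0 : ℝ) ≤ n)]
  refine squeeze_zero (fun n => by positivity) hbound ?_
  simpa using tendsto_one_div_add_atTop_nhds_zero_nat.sqrt

end CentralBinomialSeries

section RandomWalk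

open Finset Filter Topology BoolPath

variable {Ω : Type*} {X : ℕ → Ω → ℤ}

def walk (X : ℕ → Ω → ℤ) (n : ℕ) (ω : Ω) : ℤ := 1 + ∑ i ∈ range n, X i ω

/-- Since `sInf ∅ = 0`, this is `0`, not `∞`, on the (null) event that the walk never hits `0`. -/
noncomputable def zeroHittingTime (X : ℕ → Ω → ℤ) (ω : Ω) : ℕ := sInf {n | walk X n ω = 0}

def avoidsZeroUpTo (X : ℕ → Ω → ℤ) (k : ℕ) : Set Ω := {ω | ∀ j ≤ k, walk X j ω ≠ 0}

def followsPath (X : ℕ → Ω → ℤ) {k : ℕ} (v : Fin k → Bool) : Set Ω :=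
  {ω | ∀ i < k, X i ω = step v i}

lemma disjoint_followsPath {k : ℕ} {v w : Fin k → Bool} (hvw : v ≠ w) :
    Disjoint (followsPath X v) (followsPath X w) := by
  obtain ⟨i, hi⟩ := Function.ne_iff.1 hvw
  refine Set.disjoint_left.2 fun ω hv hw => hi ?_
  have := (hv i i.isLt).symm.trans (hw i i.isLt)
  simp only [step, i.isLt, dite_true] at this
  exact signOf_injective this

lemma lt_zeroHittingTime_iff {ω : Ω} (hω : ∃ n, walk X n ω = 0) {k : ℕ} :
    k < zeroHittingTime X ω ↔ ω ∈ avoidsZeroUpTo X k := by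
  refine ⟨fun h j hj => Nat.notMem_of_lt_sInf (hj.trans_lt h), fun h => ?_⟩
  by_contra! hle
  exact h _ hle (Nat.sInf_mem hω)

lemma walk_of_mem_followsPath {k : ℕ} {v : Fin k → Bool} {ω : Ω} (hω : ω ∈ followsPath X v)
    {j : ℕ} (hj : j ≤ k) : walk X j ω = 1 + height v j :=
  congrArg (1 + ·) (sum_congr rfl fun i hi => hω i ((mem_range.1 hi).trans_le hj))

lemma mem_avoidsZeroUpTo_iff_isNonneg {k : ℕ} {v : Fin k → Bool} {ω : Ω}
    (hω : ω ∈ followsPath X v) : ω ∈ avoidsZeroUpTo X k ↔ IsNonneg v := by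
  rw [isNonneg_iff_forall_height_ne]
  refine forall₂_congr fun j hj => ?_
  rw [walk_of_mem_followsPath hω hj]
  omega

lemma mem_avoidsZeroUpTo_iff_exists {k : ℕ} {ω : Ω} (hω : ∀ i, X i ω = 1 ∨ X i ω = -1) :
    ω ∈ avoidsZeroUpTo X k ↔ ∃ v : Fin k → Bool, IsNonneg v ∧ ω ∈ followsPath X v := by
  let v : Fin k → Bool := fun i => X i ω = 1
  have hv : ω ∈ followsPath X v := fun i hi => by
    rcases hω i with h | h <;> simp [v, step, hi, signOf, h]
  refine ⟨fun h => ⟨v, (mem_avoidsZeroUpTo_iff_isNonneg hv).1 h, hv⟩, ?_⟩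
  rintro ⟨w, hw, hωw⟩
  exact (mem_avoidsZeroUpTo_iff_isNonneg hωw).2 hw

variable [MeasurableSpace Ω] {P : Measure Ω} {N : Ω → ℕ}

lemma measurable_walk (hX : ∀ n, Measurable (X n)) (n : ℕ) : Measurable (walk X n) :=
  measurable_const.add (Finset.measurable_sum _ fun i _ => hX i)

lemma measurableSet_avoidsZeroUpTo (hX : ∀ n, Measurable (X n)) (k : ℕ) :
    MeasurableSet (avoidsZeroUpTo X k) := by
  simp only [avoidsZeroUpTo, Set.ofPred_forall]
  exact .iInter fun j => .iInter fun _ => (measurable_walk hX j (measurableSet_singleton 0)).compl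

lemma measurable_zeroHittingTime (hX : ∀ n, Measurable (X n)) :
    Measurable (zeroHittingTime X) := by
  refine measurable_of_Ioi fun k => ?_
  have hhit : MeasurableSet {ω | ∃ n, walk X n ω = 0} := by
    simp only [Set.ofPred_exists]
    exact .iUnion fun n => measurable_walk hX n (measurableSet_singleton 0)
  convert (measurableSet_avoidsZeroUpTo hX k).inter hhit using 1
  ext ω
  by_cases hω : ∃ n, walk X n ω = 0
  · simp [lt_zeroHittingTime_iff hω, hω]
  · have hzero : zeroHittingTime X ω = 0 :=
      Nat.sInf_eq_zero.2 (.inr (Set.eq_empty_iff_forall_notMem.2 fun n hn => hω ⟨n, hn⟩))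
    simp [hzero, hω]

lemma measurableSet_followsPath (hX : ∀ n, Measurable (X n)) {k : ℕ} (v : Fin k → Bool) :
    MeasurableSet (followsPath X v) := by
  simp only [followsPath, Set.ofPred_forall]
  exact .iInter fun i => .iInter fun _ => hX i (measurableSet_singleton _)

lemma measure_preimage_inter_followsPath
    (hstep : ∀ n, P {ω | X n ω = 1} = 1 / 2 ∧ P {ω | X n ω = -1} = 1 / 2)
    (hindep : iIndepFun (fun i : Option ℕ => i.elim (fun ω => (N ω : ℤ)) X) P)
    (B : Set ℕ) {k : ℕ} (v : Fin k → Bool) :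
    P (N ⁻¹' B ∩ followsPath X v) = P (N ⁻¹' B) * 2⁻¹ ^ k := by
  let sets : Option ℕ → Set ℤ := fun o => o.elim (Nat.cast '' B) fun i => {step v i}
  have hprod := hindep.measure_inter_preimage_eq_mul (insert none ((range k).image some))
    (sets := sets) fun _ _ => .of_discrete
  have hnone : (fun ω => (N ω : ℤ)) ⁻¹' (Nat.cast '' B) = N ⁻¹' B :=
    congrArg (N ⁻¹' ·) (Set.preimage_image_eq B Nat.cast_injective)
  have hsome : ∀ i < k, P (X i ⁻¹' {step v i}) = 2⁻¹ := fun i hi => by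
    rcases step_eq_one_or_neg_one v hi with h | h <;>
      simp [h, Set.preimage, hstep i]
  rw [set_biInter_insert, prod_insert (by simp), set_biInter_finset_image,
    prod_image fun _ _ _ _ h => Option.some_injective _ h] at hprod
  simp only [sets, Option.elim, hnone] at hprod
  rw [prod_congr rfl fun i hi => hsome i (mem_range.1 hi), prod_const, card_range] at hprod
  convert hprod using 3
  ext ω
  simp [followsPath]

lemma ae_eq_one_or_eq_neg_one [IsProbabilityMeasure P] {Y : Ω → ℤ} (hY : Measurable Y)
    (hY₁ : P {ω | Y ω = 1} = 1 / 2) (hY₂ : P {ω | Y ω = -1} = 1 / 2) :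
    ∀ᵐ ω ∂P, Y ω = 1 ∨ Y ω = -1 := by
  have hm : ∀ c, MeasurableSet {ω | Y ω = c} := fun c => hY (measurableSet_singleton c)
  rw [ae_iff_measure_eq (p := fun ω => Y ω = 1 ∨ Y ω = -1)
    ((hm 1).union (hm (-1))).nullMeasurableSet, Set.ofPred_or,
    measure_union (Set.disjoint_left.2 fun ω h₁ h₂ => by simp_all) (hm (-1)), hY₁, hY₂,
    ENNReal.add_halves, measure_univ]

lemma measure_preimage_inter_avoidsZeroUpTo [IsProbabilityMeasure P]
    (hX : ∀ n, Measurable (X n)) (hN : Measurable N)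
    (hstep : ∀ n, P {ω | X n ω = 1} = 1 / 2 ∧ P {ω | X n ω = -1} = 1 / 2)
    (hindep : iIndepFun (fun i : Option ℕ => i.elim (fun ω => (N ω : ℤ)) X) P)
    (B : Set ℕ) (k : ℕ) :
    P (N ⁻¹' B ∩ avoidsZeroUpTo X k) = P (N ⁻¹' B) * (k.choose (k / 2) / 2 ^ k) := by
  have hsigns : ∀ᵐ ω ∂P, ∀ i, X i ω = 1 ∨ X i ω = -1 :=
    ae_all_iff.2 fun i => ae_eq_one_or_eq_neg_one (hX i) (hstep i).1 (hstep i).2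
  have hcongr : (N ⁻¹' B ∩ avoidsZeroUpTo X k : Set Ω) =ᵐ[P]
      ⋃ v ∈ ({v | IsNonneg v} : Finset (Fin k → Bool)), N ⁻¹' B ∩ followsPath X v := by
    refine Filter.eventuallyEq_set.2 ?_
    filter_upwards [hsigns] with ω hω
    simp [mem_avoidsZeroUpTo_iff_exists hω]
  rw [measure_congr hcongr, measure_biUnion_finset, sum_congr rfl fun v _ =>
    measure_preimage_inter_followsPath hstep hindep B v, sum_const, card_filter_isNonneg,
    nsmul_eq_mul, ENNReal.div_eq_inv_mul, ← ENNReal.inv_pow]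
  · ring
  · exact fun v _ w _ hvw => (disjoint_followsPath hvw).mono inf_le_right inf_le_right
  · exact fun v _ => (hN (.of_discrete)).inter (measurableSet_followsPath hX v)

lemma ae_exists_walk_eq_zero [IsProbabilityMeasure P]
    (hX : ∀ n, Measurable (X n)) (hN : Measurable N)
    (hstep : ∀ n, P {ω | X n ω = 1} = 1 / 2 ∧ P {ω | X n ω = -1} = 1 / 2)
    (hindep : iIndepFun (fun i : Option ℕ => i.elim (fun ω => (N ω : ℤ)) X) P) :
    ∀ᵐ ω ∂P, ∃ n, walk X n ω = 0 := by
  rw [ae_iff, ← nonpos_iff_eq_zero, ← ENNReal.ofReal_zero]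
  refine ge_of_tendsto' (ENNReal.tendsto_ofReal tendsto_centralBinom_div_four_pow) fun j => ?_
  have hcentral : ((2 * j).choose j : ℝ≥0∞) / 2 ^ (2 * j) =
      ENNReal.ofReal (j.centralBinom / 4 ^ j) := by
    rw [ENNReal.ofReal_div_of_pos (by positivity), ENNReal.ofReal_natCast,
      ENNReal.ofReal_pow (by norm_num), ← Nat.centralBinom_eq_two_mul_choose, pow_mul]
    norm_num
  calc P {ω | ¬∃ n, walk X n ω = 0} ≤ P (avoidsZeroUpTo X (2 * j)) :=
        measure_mono fun ω hω n _ hn => hω ⟨n, hn⟩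
    _ = _ := by
        simpa [hcentral] using
          measure_preimage_inter_avoidsZeroUpTo hX hN hstep hindep .univ (2 * j)

lemma measure_lt_min_zeroHittingTime [IsProbabilityMeasure P]
    (hX : ∀ n, Measurable (X n)) (hN : Measurable N)
    (hstep : ∀ n, P {ω | X n ω = 1} = 1 / 2 ∧ P {ω | X n ω = -1} = 1 / 2)
    (hindep : iIndepFun (fun i : Option ℕ => i.elim (fun ω => (N ω : ℤ)) X) P) (k : ℕ) :
    P {ω | k < min (N ω) (zeroHittingTime X ω)} =
      P {ω | k < N ω} * (k.choose (k / 2) / 2 ^ k) := by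
  have hcongr : {ω | k < min (N ω) (zeroHittingTime X ω)} =ᵐ[P]
      (N ⁻¹' Set.Ioi k ∩ avoidsZeroUpTo X k : Set Ω) := by
    refine Filter.eventuallyEq_set.2 ?_
    filter_upwards [ae_exists_walk_eq_zero hX hN hstep hindep] with ω hω
    simp [lt_zeroHittingTime_iff hω]
  exact (measure_congr hcongr).trans
    (measure_preimage_inter_avoidsZeroUpTo hX hN hstep hindep _ k)

lemma lintegral_natCast_eq_tsum_measure_lt {f : Ω → ℕ} (hf : Measurable f) :
    ∫⁻ ω, (f ω : ℝ≥0∞) ∂P = ∑' k, P {ω | k < f ω} := by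
  have hmeas (k : ℕ) : MeasurableSet {ω | k < f ω} := hf measurableSet_Ioi
  have hsum (ω : Ω) : (f ω : ℝ≥0∞) = ∑' k, {ω | k < f ω}.indicator 1 ω := by
    rw [tsum_eq_sum (s := range (f ω)) fun k hk => by simpa using hk]
    simp [Set.indicator, filter_true_of_mem fun k hk => mem_range.1 hk]
  simp_rw [hsum]
  rw [lintegral_tsum fun k => (measurable_one.indicator (hmeas k)).aemeasurable]
  simp_rw [lintegral_indicator_one (hmeas _)]

lemma integral_natCast_eq_toReal_tsum_measure_lt {f : Ω → ℕ} (hf : Measurable f) :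
    ∫ ω, (f ω : ℝ) ∂P = (∑' k, P {ω | k < f ω}).toReal := by
  rw [← lintegral_natCast_eq_tsum_measure_lt hf, ← integral_toReal
    (f := fun ω => (f ω : ℝ≥0∞)) (measurable_from_top.comp hf).aemeasurable
    (ae_of_all _ fun ω => ENNReal.natCast_lt_top _)]
  simp

end RandomWalk

/-- Let `(S_n)` be a simple symmetric random walk on `ℤ` started at
`S_0 = 1` (i.i.d. `±1` steps with probability `1/2` each), let
`T = inf {n ≥ 0 : S_n = 0}` be its hitting time of `0`, and let `N` be a random
variable, independent of the walk, with `P(N > k) = 3^{-k}` for every `k ≥ 0`.  Then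
`E(min(N, T)) = 3(√2 - 1)`.

Independence of `N` from the walk and the i.i.d. property of the steps are packaged as
the joint independence of the family indexed by `Option ℕ` sending `none` to `N` and
`some n` to the `n`-th step `X n`. -/
theorem expected_min_geometric_hitting_time
    {Ω : Type*} [MeasurableSpace Ω] (P : Measure Ω) [IsProbabilityMeasure P]
    (X : ℕ → Ω → ℤ) (N : Ω → ℕ)
    (hX : ∀ n, Measurable (X n)) (hN : Measurable N)
    (hstep : ∀ n, P {ω | X n ω = 1} = 1 / 2 ∧ P {ω | X n ω = -1} = 1 / 2)
    (hindep : iIndepFun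
      (fun i : Option ℕ => i.elim (fun ω => (N ω : ℤ)) X) P)
    (hNlaw : ∀ k : ℕ, P {ω | k < N ω} = (3 : ℝ≥0∞)⁻¹ ^ k) :
    ∫ ω, ((min (N ω) (sInf {n : ℕ | 1 + ∑ i ∈ Finset.range n, X i ω = 0}) : ℕ) : ℝ) ∂P
      = 3 * (Real.sqrt 2 - 1) := by
  have htail (k : ℕ) : P {ω | k < min (N ω) (zeroHittingTime X ω)} =
      ENNReal.ofReal (k.choose (k / 2) / 6 ^ k) := by
    rw [measure_lt_min_zeroHittingTime hX hN hstep hindep, hNlaw,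
      ENNReal.ofReal_div_of_pos (by positivity), ENNReal.ofReal_natCast,
      ENNReal.ofReal_pow (by norm_num), show ENNReal.ofReal 6 = 3 * 2 by norm_num, mul_pow,
      div_eq_mul_inv, div_eq_mul_inv, ENNReal.mul_inv (by simp) (by simp), ENNReal.inv_pow,
      ENNReal.inv_pow]
    ring
  have hsum := hasSum_choose_half_div_six_pow
  change ∫ ω, ((min (N ω) (zeroHittingTime X ω) : ℕ) : ℝ) ∂P = _
  rw [integral_natCast_eq_toReal_tsum_measure_lt (hN.min (measurable_zeroHittingTime hX)),
    tsum_congr htail, ← ENNReal.ofReal_tsum_of_nonneg (fun k => by positivity) hsum.summable,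
    hsum.tsum_eq, ENNReal.toReal_ofReal]
  linarith [Real.one_lt_sqrt_two]
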